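/- Fix an integer k ≥ 3 and constants A⁻, A⁺, B, P, W > 0; set C₋ := (min{B^{1/k}/(3P/5), √(A⁻)/k})^k, ϑ := (W/k)((4/5)^{k+3} B)^{1/k − 1}, and C₊ := (max{B^{1/k}/(2P/5), ϑ, √(A⁺)/k})^k. Let L ≥ 2P and let w : [2P/5, L] → (0,∞) be C¹ with w(2P/5) ≤ B, w(3P/5) ≥ B, (w^{1/k})′(σ) ≤ ϑ for all σ ∈ [2P/5, 3P/5], and √(A⁻)/k ≤ (w^{1/k})′(σ) ≤ √(A⁺)/k for all σ ∈ [3P/5, L]. Then C₋ σ^k ≤ w(σ) ≤ C₊ σ^k for every σ ∈ [3P/5, L]. -/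

import Mathlib

/-!
With `f := w ^ (1/k)` we have `w = f ^ k`, and the hypotheses are slope bounds on `f`. By the
mean value inequality, `m * a ≤ f a` and `m ≤ f'` on `[a, b]` give `m * x ≤ f x` on `[a, b]`, and
likewise for upper bounds. The lower bound starts at `3P/5`, where `f ≥ B^{1/k}`; the upper bound
starts at `2P/5`, where `f ≤ B^{1/k}`, and uses `f' ≤ max(ϑ, √A⁺/k)` on all of `[2P/5, L]`.
Taking `k`-th powers gives the claim.
-/

open Topology Filter Asymptotics Set

/-- `C₋ = (min{B^{1/k}/(3P/5), √A⁻/k})^k`. -/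
noncomputable def Cminus (k : ℕ) (Am B P : ℝ) : ℝ :=
  (min (B ^ ((1:ℝ)/(k:ℝ)) / (3*P/5)) (Real.sqrt Am / (k:ℝ)))^k

/-- `ϑ = (W/k)((4/5)^{k+3} B)^{1/k - 1}`. -/
noncomputable def theta (k : ℕ) (W B : ℝ) : ℝ :=
  (W/(k:ℝ)) * (((4:ℝ)/5)^(k+3) * B) ^ ((1:ℝ)/(k:ℝ) - 1)

/-- `C₊ = (max{B^{1/k}/(2P/5), ϑ, √A⁺/k})^k`. -/
noncomputable def Cplus (k : ℕ) (Ap B P W : ℝ) : ℝ :=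
  (max (max (B ^ ((1:ℝ)/(k:ℝ)) / (2*P/5)) (theta k W B)) (Real.sqrt Ap / (k:ℝ)))^k

section LinearComparison

variable {f : ℝ → ℝ} {a b m x : ℝ}

theorem mul_le_of_le_deriv (hf : ContinuousOn f (Icc a b))
    (hf' : DifferentiableOn ℝ f (Ioo a b)) (ha : m * a ≤ f a)
    (hm : ∀ y ∈ Ioo a b, m ≤ deriv f y) (hx : x ∈ Icc a b) : m * x ≤ f x := by
  have hslope := (convex_Icc a b).mul_sub_le_image_sub_of_le_deriv hf
    (by rwa [interior_Icc]) (by rwa [interior_Icc]) a (left_mem_Icc.2 (hx.1.trans hx.2)) x hx hx.1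
  linarith [mul_sub m x a]

theorem le_mul_of_deriv_le (hf : ContinuousOn f (Icc a b))
    (hf' : DifferentiableOn ℝ f (Ioo a b)) (ha : f a ≤ m * a)
    (hm : ∀ y ∈ Ioo a b, deriv f y ≤ m) (hx : x ∈ Icc a b) : f x ≤ m * x := by
  have hslope := (convex_Icc a b).image_sub_le_mul_sub_of_deriv_le hf
    (by rwa [interior_Icc]) (by rwa [interior_Icc]) a (left_mem_Icc.2 (hx.1.trans hx.2)) x hx hx.1
  linarith [mul_sub m x a]

end LinearComparison

section Root

variable {k : ℕ} {x c : ℝ}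

theorem pow_le_of_le_rpow_one_div (hk : k ≠ 0) (hx : 0 ≤ x) (hc : 0 ≤ c)
    (h : c ≤ x ^ ((1 : ℝ) / k)) : c ^ k ≤ x :=
  calc c ^ k ≤ (x ^ ((1 : ℝ) / k)) ^ k := pow_le_pow_left₀ hc h k
    _ = x := by rw [one_div, Real.rpow_inv_natCast_pow hx hk]

theorem le_pow_of_rpow_one_div_le (hk : k ≠ 0) (hx : 0 ≤ x)
    (h : x ^ ((1 : ℝ) / k) ≤ c) : x ≤ c ^ k :=
  calc x = (x ^ ((1 : ℝ) / k)) ^ k := by rw [one_div, Real.rpow_inv_natCast_pow hx hk]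
    _ ≤ c ^ k := pow_le_pow_left₀ (Real.rpow_nonneg hx _) h k

end Root

theorem stmt14_general (k : ℕ) (hk : 3 ≤ k) (Am Ap B P W : ℝ)
    (hB : 0 < B) (hP : 0 < P)
    (L : ℝ) (w : ℝ → ℝ)
    (hpos : ∀ σ ∈ Set.Icc (2*P/5) L, 0 < w σ)
    (hC1 : ContDiffOn ℝ 1 w (Set.Icc (2*P/5) L))
    (hwa : w (2*P/5) ≤ B)
    (hwb : B ≤ w (3*P/5))
    (htheta : ∀ σ ∈ Set.Icc (2*P/5) (3*P/5),
      deriv (fun s => w s ^ ((1:ℝ)/(k:ℝ))) σ ≤ theta k W B)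
    (hderiv : ∀ σ ∈ Set.Icc (3*P/5) L,
      Real.sqrt Am / (k:ℝ) ≤ deriv (fun s => w s ^ ((1:ℝ)/(k:ℝ))) σ ∧
      deriv (fun s => w s ^ ((1:ℝ)/(k:ℝ))) σ ≤ Real.sqrt Ap / (k:ℝ)) :
    ∀ σ ∈ Set.Icc (3*P/5) L,
      Cminus k Am B P * σ^k ≤ w σ ∧ w σ ≤ Cplus k Ap B P W * σ^k := by
  intro σ hσ
  have hk0 : k ≠ 0 := by omega
  have hσ' : σ ∈ Icc (2*P/5) L := ⟨by linarith [hσ.1], hσ.2⟩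
  have hroot : DifferentiableOn ℝ (fun s => w s ^ ((1:ℝ)/(k:ℝ))) (Icc (2*P/5) L) :=
    (hC1.differentiableOn one_ne_zero).rpow_const fun s hs => Or.inl (hpos s hs).ne'
  refine ⟨?_, ?_⟩
  · set m := min (B ^ ((1:ℝ)/(k:ℝ)) / (3*P/5)) (Real.sqrt Am / (k:ℝ))
    have hstart : m * (3*P/5) ≤ w (3*P/5) ^ ((1:ℝ)/(k:ℝ)) :=
      calc m * (3*P/5) ≤ B ^ ((1:ℝ)/(k:ℝ)) := (le_div_iff₀ (by positivity)).1 (min_le_left _ _)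
        _ ≤ _ := Real.rpow_le_rpow hB.le hwb (by positivity)
    have hroot' := hroot.mono (Icc_subset_Icc_left (by linarith) : Icc (3*P/5) L ⊆ _)
    have hlin := mul_le_of_le_deriv hroot'.continuousOn (hroot'.mono Ioo_subset_Icc_self)
      hstart (fun y hy => (min_le_right _ _).trans (hderiv y (Ioo_subset_Icc_self hy)).1) hσ
    rw [Cminus, ← mul_pow]
    exact pow_le_of_le_rpow_one_div hk0 (hpos σ hσ').le
      (mul_nonneg (le_min (by positivity) (by positivity)) (by linarith [hσ.1])) hlin
  · set M := max (max (B ^ ((1:ℝ)/(k:ℝ)) / (2*P/5)) (theta k W B)) (Real.sqrt Ap / (k:ℝ))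
    have hstart : w (2*P/5) ^ ((1:ℝ)/(k:ℝ)) ≤ M * (2*P/5) :=
      calc w (2*P/5) ^ ((1:ℝ)/(k:ℝ)) ≤ B ^ ((1:ℝ)/(k:ℝ)) :=
            Real.rpow_le_rpow (hpos _ ⟨le_rfl, hσ'.1.trans hσ'.2⟩).le hwa (by positivity)
        _ ≤ M * (2*P/5) :=
            (div_le_iff₀ (by positivity)).1 ((le_max_left _ _).trans (le_max_left _ _))
    have hslope : ∀ y ∈ Ioo (2*P/5) L, deriv (fun s => w s ^ ((1:ℝ)/(k:ℝ))) y ≤ M := by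
      intro y hy
      rcases le_total y (3*P/5) with hy3 | hy3
      · exact (htheta y ⟨hy.1.le, hy3⟩).trans ((le_max_right _ _).trans (le_max_left _ _))
      · exact (hderiv y ⟨hy3, hy.2.le⟩).2.trans (le_max_right _ _)
    have hlin := le_mul_of_deriv_le hroot.continuousOn (hroot.mono Ioo_subset_Icc_self)
      hstart hslope hσ'
    rw [Cplus, ← mul_pow]
    exact le_pow_of_rpow_one_div_le hk0 (hpos σ hσ').le hlin

/-- the growth estimate `C₋ σ^k ≤ w(σ) ≤ C₊ σ^k` at the
parabolic–intermediate interface. -/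
theorem stmt14 (k : ℕ) (hk : 3 ≤ k) (Am Ap B P W : ℝ)
    (hAm : 0 < Am) (hAp : 0 < Ap) (hB : 0 < B) (hP : 0 < P) (hW : 0 < W)
    (L : ℝ) (hL : 2*P ≤ L) (w : ℝ → ℝ)
    (hpos : ∀ σ ∈ Set.Icc (2*P/5) L, 0 < w σ)
    (hC1 : ContDiffOn ℝ 1 w (Set.Icc (2*P/5) L))
    (hwa : w (2*P/5) ≤ B)
    (hwb : B ≤ w (3*P/5))
    (htheta : ∀ σ ∈ Set.Icc (2*P/5) (3*P/5),
      deriv (fun s => w s ^ ((1:ℝ)/(k:ℝ))) σ ≤ theta k W B)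
    (hderiv : ∀ σ ∈ Set.Icc (3*P/5) L,
      Real.sqrt Am / (k:ℝ) ≤ deriv (fun s => w s ^ ((1:ℝ)/(k:ℝ))) σ ∧
      deriv (fun s => w s ^ ((1:ℝ)/(k:ℝ))) σ ≤ Real.sqrt Ap / (k:ℝ)) :
    ∀ σ ∈ Set.Icc (3*P/5) L,
      Cminus k Am B P * σ^k ≤ w σ ∧ w σ ≤ Cplus k Ap B P W * σ^k :=
  stmt14_general k hk Am Ap B P W hB hP L w hpos hC1 hwa hwb htheta hderiv
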